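/- arXiv:2511.20047 — 8 statements merged into one kernel-verified Lean document; each statement's English description precedes it below -/
import Mathlib

section
/- There exists ε₀ > 0 such that the following holds for every ε ∈ (0, ε₀). Let n, n₁, …, n_m be unit vectors in EuclideanSpace ℝ (Fin 3) such that the angle between any two distinct vectors among n, n₁, …, n_m is at least 10 * ε^(2/3). Let a₁, …, a_m ∈ ℝ, let K = (Metric.closedBall 0 1) ∩ ⋂_{i=1}^m {x | ⟪n_i, x⟫ ≤ a_i}, assume K is nonempty, and let M = sup_{x ∈ K} ⟪n, x⟫. Then for every v with ⟪n, v⟫ = M − ε, the planar disk {x | ⟪n, x⟫ = M − ε ∧ ‖x − v‖ ≤ 10 * ε^(1/3)} is NOT contained in K. -/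
/-!
If the face contained the disk of radius `r = 10 ε^{1/3}` around `v`, then `v + 2ε • n` would
still lie in `K`, although `⟪n, v + 2ε • n⟫ = M + ε`. The ball constraint survives because the
antipodal disk points `v ± r • u` force `‖v‖² + r² ≤ 1`, and `r² = 100 ε^{2/3}` dwarfs the
increase of at most `4ε + 4ε²` in `‖v‖²`. A half-space `⟪nᵢ, x⟫ ≤ aᵢ` survives because the disk point in
the direction of the component of `nᵢ` orthogonal to `n` gains
`r · sin ∠(n, nᵢ) ≥ r · sin (10 ε^{2/3}) ≈ 100 ε` over `v`, more than the lift gains.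
-/

open RealInnerProductSpace InnerProductGeometry Real Module

section InnerProductSpace

variable {E : Type*} [NormedAddCommGroup E] [InnerProductSpace ℝ E]

theorem exists_norm_eq_one_inner_eq_zero [FiniteDimensional ℝ E] (hE : 2 ≤ finrank ℝ E)
    {n : E} (hn : n ≠ 0) : ∃ u : E, ‖u‖ = 1 ∧ ⟪n, u⟫ = 0 := by
  have hne : (ℝ ∙ n)ᗮ ≠ ⊥ := by
    intro hbot
    have hdim := (ℝ ∙ n).finrank_add_finrank_orthogonal
    rw [hbot, finrank_bot, finrank_span_singleton hn] at hdim
    omega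
  obtain ⟨w, hw, hw0⟩ := Submodule.exists_mem_ne_zero_of_ne_bot hne
  refine ⟨(‖w‖⁻¹ : ℝ) • w, norm_smul_inv_norm hw0, ?_⟩
  rw [inner_smul_right, Submodule.mem_orthogonal_singleton_iff_inner_right.1 hw, mul_zero]

theorem norm_sq_add_norm_sq_le_of_norm_add_le_of_norm_sub_le {v u : E} {R : ℝ}
    (h₁ : ‖v + u‖ ≤ R) (h₂ : ‖v - u‖ ≤ R) : ‖v‖ ^ 2 + ‖u‖ ^ 2 ≤ R ^ 2 := by
  have hpar := parallelogram_law_with_norm ℝ v u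
  have h₁' := mul_self_le_mul_self (norm_nonneg _) h₁
  have h₂' := mul_self_le_mul_self (norm_nonneg _) h₂
  nlinarith

theorem norm_add_smul_le_one {n v : E} {r t : ℝ} (hn : ‖n‖ = 1) (hv : ‖v‖ ^ 2 + r ^ 2 ≤ 1)
    (ht₀ : 0 ≤ t) (ht : 2 * t + t ^ 2 ≤ r ^ 2) : ‖v + t • n‖ ≤ 1 := by
  have hv₁ : ⟪v, n⟫ ≤ 1 := by
    have := real_inner_le_norm v n
    rw [hn, mul_one] at this
    nlinarith [norm_nonneg v]
  have hsq : ‖v + t • n‖ ^ 2 ≤ 1 := by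
    rw [norm_add_sq_real, real_inner_smul_right, norm_smul, hn, mul_one, norm_of_nonneg ht₀]
    nlinarith
  nlinarith [norm_nonneg (v + t • n)]

section Component

variable {n b : E}

theorem inner_sub_inner_smul_self (hn : ‖n‖ = 1) : ⟪n, b - ⟪n, b⟫ • n⟫ = 0 := by
  rw [inner_sub_right, real_inner_smul_right, real_inner_self_eq_norm_sq, hn]
  ring

theorem norm_sub_inner_smul_sq (hn : ‖n‖ = 1) :
    ‖b - ⟪n, b⟫ • n‖ ^ 2 = ‖b‖ ^ 2 - ⟪n, b⟫ ^ 2 := by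
  rw [norm_sub_sq_real, real_inner_smul_right, norm_smul, hn, real_inner_comm, norm_eq_abs]
  ring_nf
  rw [sq_abs]
  ring

theorem inner_sub_inner_smul (hn : ‖n‖ = 1) : ⟪b, b - ⟪n, b⟫ • n⟫ = ‖b - ⟪n, b⟫ • n‖ ^ 2 := by
  rw [norm_sub_inner_smul_sq hn, inner_sub_right, real_inner_smul_right,
    real_inner_self_eq_norm_sq, real_inner_comm]
  ring

theorem sin_le_norm_sub_inner_smul {θ : ℝ} (hn : ‖n‖ = 1) (hb : ‖b‖ = 1) (hθ₀ : 0 ≤ θ)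
    (hθ : θ ≤ angle n b) (hnb : 0 ≤ ⟪n, b⟫) : sin θ ≤ ‖b - ⟪n, b⟫ • n‖ := by
  have hcos : ⟪n, b⟫ ≤ cos θ := by
    have := cos_le_cos_of_nonneg_of_le_pi hθ₀ (angle_le_pi n b) hθ
    rwa [cos_angle, hn, hb, mul_one, div_one] at this
  refine le_of_pow_le_pow_left₀ two_ne_zero (norm_nonneg _) ?_
  rw [norm_sub_inner_smul_sq hn, hb, sin_sq]
  nlinarith

variable {v : E} {r α : ℝ}

theorem inner_add_mul_norm_le_of_forall_disk (hn : ‖n‖ = 1) (hv : ⟪b, v⟫ ≤ α)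
    (hdisk : ∀ u, ‖u‖ = 1 → ⟪n, u⟫ = 0 → ⟪b, v + r • u⟫ ≤ α) :
    ⟪b, v⟫ + r * ‖b - ⟪n, b⟫ • n‖ ≤ α := by
  set w := b - ⟪n, b⟫ • n with hw
  rcases eq_or_ne w 0 with hw₀ | hw₀
  · simpa [hw₀] using hv
  have hu := hdisk ((‖w‖⁻¹ : ℝ) • w) (norm_smul_inv_norm hw₀)
    (by rw [real_inner_smul_right, hw, inner_sub_inner_smul_self hn, mul_zero])
  rwa [inner_add_right, real_inner_smul_right, real_inner_smul_right, hw,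
    inner_sub_inner_smul hn, ← hw, sq, inv_mul_cancel_left₀ (norm_ne_zero_iff.2 hw₀)] at hu

theorem inner_add_smul_le_of_forall_disk {θ t : ℝ} (hn : ‖n‖ = 1) (hb : ‖b‖ = 1)
    (hθ₀ : 0 ≤ θ) (hθ : θ ≤ angle n b) (hr : 0 ≤ r) (ht₀ : 0 ≤ t) (ht : t ≤ r * sin θ)
    (hv : ⟪b, v⟫ ≤ α)
    (hdisk : ∀ u, ‖u‖ = 1 → ⟪n, u⟫ = 0 → ⟪b, v + r • u⟫ ≤ α) : ⟪b, v + t • n⟫ ≤ α := by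
  rw [inner_add_right, real_inner_smul_right, real_inner_comm n b]
  rcases le_or_gt ⟪n, b⟫ 0 with hnb | hnb
  · nlinarith
  have hnb₁ : ⟪n, b⟫ ≤ 1 := by simpa [hn, hb] using real_inner_le_norm n b
  calc ⟪b, v⟫ + t * ⟪n, b⟫ ≤ ⟪b, v⟫ + r * ‖b - ⟪n, b⟫ • n‖ := by
        gcongr ⟪b, v⟫ + ?_
        calc t * ⟪n, b⟫ ≤ t := mul_le_of_le_one_right ht₀ hnb₁
          _ ≤ r * sin θ := ht
          _ ≤ r * ‖b - ⟪n, b⟫ • n‖ := by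
            gcongr; exact sin_le_norm_sub_inner_smul hn hb hθ₀ hθ hnb.le
    _ ≤ α := inner_add_mul_norm_le_of_forall_disk hn hv hdisk

end Component

theorem add_smul_mem_of_forall_disk {ι : Type*} {b : ι → E} {α : ι → ℝ} {n v : E}
    {r θ t : ℝ} (hn : ‖n‖ = 1) (hb : ∀ i, ‖b i‖ = 1) (hθ₀ : 0 ≤ θ)
    (hθ : ∀ i, θ ≤ angle n (b i)) (hr : 0 ≤ r) (ht₀ : 0 ≤ t) (ht : t ≤ r * sin θ)
    (htr : 2 * t + t ^ 2 ≤ r ^ 2) (hperp : ∃ u : E, ‖u‖ = 1 ∧ ⟪n, u⟫ = 0)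
    (hv : v ∈ Metric.closedBall 0 1 ∩ ⋂ i, {x | ⟪b i, x⟫ ≤ α i})
    (hdisk : ∀ u, ‖u‖ = 1 → ⟪n, u⟫ = 0 →
      v + r • u ∈ Metric.closedBall 0 1 ∩ ⋂ i, {x | ⟪b i, x⟫ ≤ α i}) :
    v + t • n ∈ Metric.closedBall 0 1 ∩ ⋂ i, {x | ⟪b i, x⟫ ≤ α i} := by
  simp only [Set.mem_inter_iff, mem_closedBall_zero_iff, Set.mem_iInter, Set.mem_ofPred_eq]
    at hv hdisk ⊢
  obtain ⟨u, hu, hnu⟩ := hperp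
  have hball : ‖v‖ ^ 2 + r ^ 2 ≤ 1 := by
    have hsub := (hdisk (-u) (by rwa [norm_neg]) (by rw [inner_neg_right, hnu, neg_zero])).1
    rw [smul_neg, ← sub_eq_add_neg] at hsub
    simpa [norm_smul, hu, abs_of_nonneg hr] using
      norm_sq_add_norm_sq_le_of_norm_add_le_of_norm_sub_le (hdisk u hu hnu).1 hsub
  exact ⟨norm_add_smul_le_one hn hball ht₀ htr, fun i => inner_add_smul_le_of_forall_disk hn
    (hb i) hθ₀ (hθ i) hr ht₀ ht (hv.2 i) fun u hu hnu => (hdisk u hu hnu).2 i⟩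

end InnerProductSpace

/-- Lemma 1: the face `K ∩ {⟪n,·⟫ = M - ε}` contains no disk of radius `10 ε^{1/3}`. -/
theorem stmt_1 :
    ∃ ε₀ : ℝ, 0 < ε₀ ∧
      ∀ ε : ℝ, ε ∈ Set.Ioo (0 : ℝ) ε₀ →
        ∀ (m : ℕ) (n : EuclideanSpace ℝ (Fin 3)) (nv : Fin m → EuclideanSpace ℝ (Fin 3))
          (a : Fin m → ℝ),
          ‖n‖ = 1 → (∀ i, ‖nv i‖ = 1) →
          (∀ i, InnerProductGeometry.angle n (nv i) ≥ 10 * ε ^ ((2 : ℝ) / 3)) →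
          (∀ i j, i ≠ j → InnerProductGeometry.angle (nv i) (nv j) ≥ 10 * ε ^ ((2 : ℝ) / 3)) →
          ∀ K : Set (EuclideanSpace ℝ (Fin 3)),
            K = Metric.closedBall 0 1 ∩ ⋂ i, {x | ⟪nv i, x⟫ ≤ a i} →
            K.Nonempty →
            ∀ M : ℝ, M = sSup ((fun x => ⟪n, x⟫) '' K) →
              ∀ v : EuclideanSpace ℝ (Fin 3), ⟪n, v⟫ = M - ε →
                ¬ ({x | ⟪n, x⟫ = M - ε ∧ ‖x - v‖ ≤ 10 * ε ^ ((1 : ℝ) / 3)} ⊆ K) := by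
  refine ⟨1 / 1000, by norm_num, ?_⟩
  rintro ε ⟨hε₀, hε⟩ m n nv a hn hnv hang - K hK - M hM v hv hsub
  rw [hK] at hsub
  set p := ε ^ ((1 : ℝ) / 3) with hp
  have hp₀ : 0 < p := by positivity
  have hp3 : p ^ 3 = ε := by rw [hp, ← rpow_natCast, ← rpow_mul hε₀.le]; norm_num
  have hp2 : ε ^ ((2 : ℝ) / 3) = p ^ 2 := by
    rw [hp, ← rpow_natCast, ← rpow_mul hε₀.le]; norm_num
  have hp₁ : p < 1 / 10 := lt_of_pow_lt_pow_left₀ 3 (by norm_num) (by rw [hp3]; linarith)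
  have hsin : 5 * p ^ 2 ≤ sin (10 * p ^ 2) := by
    refine le_trans ?_ (mul_le_sin (by positivity) (by nlinarith [pi_gt_three]))
    rw [div_mul_eq_mul_div, le_div_iff₀ pi_pos]
    nlinarith [pi_le_four]
  have hlift : v + (2 * ε) • n ∈ K := by
    rw [hK]
    refine add_smul_mem_of_forall_disk (r := 10 * p) (θ := 10 * p ^ 2) hn hnv (by positivity)
      (fun i => hp2 ▸ hang i) (by positivity) (by positivity) (by nlinarith) (by nlinarith)
      (exists_norm_eq_one_inner_eq_zero (by simp) (norm_ne_zero_iff.1 (by rw [hn]; norm_num)))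
      (hsub ⟨hv, by simp; positivity⟩) fun u hu hnu => hsub ⟨?_, ?_⟩
    · rw [inner_add_right, real_inner_smul_right, hnu, hv, mul_zero, add_zero]
    · rw [add_sub_cancel_left, norm_smul, hu, mul_one, norm_of_nonneg (by positivity)]
  have hbdd : BddAbove ((fun x => ⟪n, x⟫) '' K) := by
    refine ⟨1, ?_⟩
    rintro _ ⟨x, hx, rfl⟩
    rw [hK] at hx
    simpa [hn] using (real_inner_le_norm n x).trans (by simpa [hn] using hx.1)
  have hmax := hM ▸ le_csSup hbdd (Set.mem_image_of_mem _ hlift)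
  rw [inner_add_right, real_inner_smul_right, real_inner_self_eq_norm_sq, hn, hv] at hmax
  linarith
end

section
/- Let K be a nonempty compact convex set in EuclideanSpace ℝ (Fin 3), let n be a unit vector, let ε > 0 and a ∈ ℝ, and let P' = {x | a ≤ ⟪n, x⟫ ≤ a + ε}. Assume K ⊆ {x | ⟪n, x⟫ ≤ a + ε} (the upper boundary plane of P' supports K from above). Then Metric.cthickening 1 (K \ P') ⊆ (Metric.cthickening 1 K) \ {x | ⟪n, x⟫ > a + 1}; in particular, the parallel body of K \ P' at distance 1 is disjoint from the open half-space bounded below by the plane {x | ⟪n, x⟫ = a + 1}, which is the lower boundary plane of the plank P'' = {x | a + 1 ≤ ⟪n, x⟫ ≤ a + 1 + ε} obtained by translating P' a distance 1 in direction n. -/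
open RealInnerProductSpace

/-! Points of `K \ P'` lie strictly below the plane `⟪n, x⟫ = a`, because `K` lies below
`⟪n, x⟫ = a + ε`. Since `x ↦ ⟪n, x⟫` is `1`-Lipschitz for a unit vector `n`, thickening by `1`
raises this height by at most `1`, so the parallel body stays below `⟪n, x⟫ = a + 1`. -/

theorem LipschitzWith.cthickening_subset_setOf_le {α : Type*} [PseudoMetricSpace α]
    {f : α → ℝ} (hf : LipschitzWith 1 f) {s : Set α} {c δ : ℝ} (hδ : 0 ≤ δ)
    (hs : ∀ x ∈ s, f x ≤ c) : Metric.cthickening δ s ⊆ {x | f x ≤ c + δ} := by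
  intro x hx
  show f x ≤ c + δ
  refine le_of_forall_pos_le_add fun η hη => ?_
  obtain ⟨y, hy, hxy⟩ := Set.mem_iUnion₂.mp <|
    Metric.cthickening_subset_iUnion_closedBall_of_lt s (by linarith)
      (lt_add_of_pos_right δ hη) hx
  have hfxy := hf.le_add_mul x y
  rw [NNReal.coe_one, one_mul] at hfxy
  linarith [Metric.mem_closedBall.mp hxy, hs y hy]

theorem lipschitzWith_one_inner_left {E : Type*} [NormedAddCommGroup E] [InnerProductSpace ℝ E]
    {n : E} (hn : ‖n‖ = 1) : LipschitzWith 1 (fun x => ⟪n, x⟫) :=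
  LipschitzWith.of_le_add fun x y => by
    have h := real_inner_le_norm n (x - y)
    rw [inner_sub_right, hn, one_mul, ← dist_eq_norm] at h
    linarith

theorem stmt_3_general (K : Set (EuclideanSpace ℝ (Fin 3)))
    (n : EuclideanSpace ℝ (Fin 3)) (hn : ‖n‖ = 1) (ε : ℝ) (a : ℝ)
    (P' : Set (EuclideanSpace ℝ (Fin 3)))
    (hP' : P' = {x | a ≤ ⟪n, x⟫ ∧ ⟪n, x⟫ ≤ a + ε})
    (hsup : K ⊆ {x | ⟪n, x⟫ ≤ a + ε}) :
    Metric.cthickening 1 (K \ P') ⊆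
      Metric.cthickening 1 K \ {x | ⟪n, x⟫ > a + 1} := by
  have hbelow : ∀ w ∈ K \ P', ⟪n, w⟫ ≤ a := by
    rintro w ⟨hwK, hwP'⟩
    by_contra! hlt
    exact hwP' (hP' ▸ ⟨hlt.le, hsup hwK⟩)
  intro x hx
  refine ⟨Metric.cthickening_subset_of_subset 1 Set.sdiff_subset hx, ?_⟩
  have hx_le : ⟪n, x⟫ ≤ a + 1 :=
    (lipschitzWith_one_inner_left hn).cthickening_subset_setOf_le zero_le_one hbelow hx
  exact hx_le.not_gt

/-- Proposition 1: `B(K \ P') ⊆ B(K) \ Π`, where `Π` is the open half-space above the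
lower boundary plane of the plank `P'` translated by distance 1 in direction `n`. -/
theorem stmt_3 (K : Set (EuclideanSpace ℝ (Fin 3))) (hKne : K.Nonempty)
    (hKc : IsCompact K) (hKconv : Convex ℝ K)
    (n : EuclideanSpace ℝ (Fin 3)) (hn : ‖n‖ = 1) (ε : ℝ) (hε : 0 < ε) (a : ℝ)
    (P' : Set (EuclideanSpace ℝ (Fin 3)))
    (hP' : P' = {x | a ≤ ⟪n, x⟫ ∧ ⟪n, x⟫ ≤ a + ε})
    (hsup : K ⊆ {x | ⟪n, x⟫ ≤ a + ε}) :
    Metric.cthickening 1 (K \ P') ⊆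
      Metric.cthickening 1 K \ {x | ⟪n, x⟫ > a + 1} :=
  stmt_3_general K n hn ε a P' hP' hsup
end

section
/- Let K be a nonempty compact convex set in EuclideanSpace ℝ (Fin 3) and let n be a unit vector. Then there exists k ∈ K such that Metric.closedBall k 1 ⊆ Metric.cthickening 1 K and for every x ∈ Metric.cthickening 1 K one has ⟪n, x⟫ ≤ ⟪n, k⟫ + 1. In particular, the point s = k + n lies in Metric.closedBall k 1, attains the maximum of ⟪n, ·⟫ over Metric.cthickening 1 K, and the unit ball Metric.closedBall k 1 touches the boundary of the parallel body at this highest point s in direction n. -/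
open RealInnerProductSpace Metric

theorem inner_le_add_of_mem_cthickening {E : Type*} [NormedAddCommGroup E]
    [InnerProductSpace ℝ E] {K : Set E} (hK : IsCompact K) {n : E} {c δ : ℝ} (hδ : 0 ≤ δ)
    (hKc : ∀ w ∈ K, ⟪n, w⟫ ≤ c) {x : E} (hx : x ∈ cthickening δ K) :
    ⟪n, x⟫ ≤ c + ‖n‖ * δ := by
  rw [hK.cthickening_eq_biUnion_closedBall hδ, Set.mem_iUnion₂] at hx
  obtain ⟨w, hwK, hxw⟩ := hx
  rw [mem_closedBall, dist_eq_norm] at hxw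
  calc ⟪n, x⟫ = ⟪n, w⟫ + ⟪n, x - w⟫ := by rw [← inner_add_right, add_sub_cancel]
    _ ≤ c + ‖n‖ * ‖x - w‖ := add_le_add (hKc w hwK) (real_inner_le_norm n _)
    _ ≤ c + ‖n‖ * δ := by gcongr

theorem stmt_4_general (K : Set (EuclideanSpace ℝ (Fin 3))) (hKne : K.Nonempty)
    (hKc : IsCompact K)
    (n : EuclideanSpace ℝ (Fin 3)) (hn : ‖n‖ = 1) :
    ∃ k ∈ K, Metric.closedBall k 1 ⊆ Metric.cthickening 1 K ∧
      ∀ x ∈ Metric.cthickening 1 K, ⟪n, x⟫ ≤ ⟪n, k⟫ + 1 := by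
  obtain ⟨k, hkK, hmax⟩ :=
    hKc.exists_isMaxOn hKne (f := (⟪n, ·⟫)) (continuous_const.inner continuous_id).continuousOn
  refine ⟨k, hkK, closedBall_subset_cthickening hkK 1, fun x hx => ?_⟩
  simpa [hn] using inner_le_add_of_mem_cthickening hKc zero_le_one (fun w hw => hmax hw) hx

/-- Proposition 2: the parallel body `B(K)` contains a unit ball touching its boundary
at the point of `B(K)` that is highest in direction `n`. -/
theorem stmt_4 (K : Set (EuclideanSpace ℝ (Fin 3))) (hKne : K.Nonempty)
    (hKc : IsCompact K) (hKconv : Convex ℝ K)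
    (n : EuclideanSpace ℝ (Fin 3)) (hn : ‖n‖ = 1) :
    ∃ k ∈ K, Metric.closedBall k 1 ⊆ Metric.cthickening 1 K ∧
      ∀ x ∈ Metric.cthickening 1 K, ⟪n, x⟫ ≤ ⟪n, k⟫ + 1 :=
  stmt_4_general K hKne hKc n hn
end

section
/- Let X be a compact convex subset of EuclideanSpace ℝ (Fin 2) with diameter at most 2, let r ∈ (0, 1], and assume that X contains no closed disk of radius r, i.e., there is no v with Metric.closedBall v r ⊆ X. Then the Lebesgue measure (area) of X is at most 6 * r. -/
/-!
Let `c ∈ X` maximise the distance `ρ` to the complement, so that `ball c ρ ⊆ X` and `ρ < r`.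
Maximality forces `c` into the convex hull of its nearest points `y` in `closure Xᶜ`: otherwise
moving `c` away from all of them increases the distance. Each such `y` gives the supporting
half-space `⟪y - c, x - c⟫ ≤ ρ²`, and by Carathéodory one of them carries weight at least
`1 / (n + 1)` in a convex combination equal to `c`, which bounds `X` on the opposite side by
`⟪y - c, x - c⟫ ≥ -n ρ²`. So `X` lies in a slab of width `(n + 1) ρ`, and bounding the remaining
coordinates of an orthonormal frame by the diameter gives `volume X ≤ (n + 1) ρ · diam X ^ (n - 1)`,
which is `3 ρ · 2 ≤ 6 r` in the plane.
-/

open MeasureTheory Metric Set Module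
open scoped RealInnerProductSpace

theorem neg_mul_le_of_sum_mul_eq_zero {ι : Type*} [Fintype ι] {w a : ι → ℝ} {M k : ℝ}
    (hw : ∀ i, 0 ≤ w i) (hw1 : ∑ i, w i = 1) (hwa : ∑ i, w i * a i = 0) (ha : ∀ i, a i ≤ M)
    {j : ι} (hj : 1 ≤ k * w j) : -((k - 1) * M) ≤ a j := by
  have hM : 0 ≤ M := by
    have := Finset.sum_le_sum fun i (_ : i ∈ Finset.univ) ↦ mul_le_mul_of_nonneg_left (ha i) (hw i)
    rwa [hwa, ← Finset.sum_mul, hw1, one_mul] at this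
  have hj' : w j * (M - a j) ≤ M := by
    have := Finset.single_le_sum (f := fun i ↦ w i * (M - a i))
      (fun i _ ↦ mul_nonneg (hw i) (sub_nonneg.2 (ha i))) (Finset.mem_univ j)
    simpa only [mul_sub, Finset.sum_sub_distrib, ← Finset.sum_mul, hw1, hwa, one_mul,
      sub_zero] using this
  have hwj : 0 < w j := (hw j).lt_of_ne' fun h ↦ by simp [h] at hj; linarith
  nlinarith [mul_le_mul_of_nonneg_right hj hM]

theorem IsCompact.convexHull {F : Type*} [NormedAddCommGroup F] [NormedSpace ℝ F]
    [FiniteDimensional ℝ F] {s : Set F} (hs : IsCompact s) : IsCompact (_root_.convexHull ℝ s) := by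
  have hhull : _root_.convexHull ℝ s = ⋃ k ∈ Finset.range (finrank ℝ F + 2),
      (fun p : (Fin k → ℝ) × (Fin k → F) ↦ ∑ i, p.1 i • p.2 i) ''
        (stdSimplex ℝ (Fin k) ×ˢ univ.pi fun _ ↦ s) := by
    refine Subset.antisymm (fun x hx ↦ ?_) (iUnion₂_subset fun k _ ↦ ?_)
    · obtain ⟨ι, _, z, w, hzs, hz, hw0, hw1, rfl⟩ := eq_pos_convex_span_of_mem_convexHull hx
      have hcard : Fintype.card ι < finrank ℝ F + 2 := by
        have := Submodule.finrank_le (vectorSpan ℝ (range z))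
        have := hz.card_le_finrank_succ
        omega
      let e := Fintype.equivFin ι
      refine mem_biUnion (Finset.mem_coe.2 (Finset.mem_range.2 hcard))
        ⟨(w ∘ e.symm, z ∘ e.symm), ⟨⟨fun _ ↦ (hw0 _).le, ?_⟩, fun _ _ ↦ hzs (mem_range_self _)⟩,
          e.symm.sum_comp fun i ↦ w i • z i⟩
      rw [← hw1]
      exact e.symm.sum_comp w
    · rintro _ ⟨⟨w, z⟩, ⟨⟨hw0, hw1⟩, hz⟩, rfl⟩
      exact (convex_convexHull ℝ s).sum_mem (fun i _ ↦ hw0 i) hw1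
        fun i _ ↦ subset_convexHull ℝ s (hz i trivial)
  rw [hhull]
  exact (Finset.range _).isCompact_biUnion fun k _ ↦
    ((isCompact_stdSimplex ℝ (Fin k)).prod (isCompact_univ_pi fun _ ↦ hs)).image (by fun_prop)

theorem Metric.exists_gt_infDist_forall_le_dist {α : Type*} [PseudoMetricSpace α] [ProperSpace α]
    {T : Set α} (hT : IsClosed T) {c : α} {f : α → ℝ} (hf : Continuous f) {τ : ℝ}
    (hnear : ∀ y ∈ T, dist c y = infDist c T → τ < f y) :
    ∃ m, infDist c T < m ∧ ∀ y ∈ T, f y ≤ τ → m ≤ dist c y := by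
  set ρ := infDist c T
  have hW : IsCompact (T ∩ closedBall c (ρ + 1) ∩ {y | f y ≤ τ}) :=
    ((isCompact_closedBall c _).inter_left hT).inter_right (isClosed_le hf continuous_const)
  obtain ⟨m, hρm, hm⟩ := hW.exists_forall_le' (continuous_const.dist continuous_id).continuousOn
    fun y ⟨⟨hyT, _⟩, hfy⟩ ↦
      (infDist_le_dist_of_mem hyT).lt_of_ne fun h ↦ (hnear y hyT h.symm).not_ge hfy
  refine ⟨min m (ρ + 1), lt_min hρm (by linarith), fun y hyT hfy ↦ ?_⟩
  by_cases hy : dist c y ≤ ρ + 1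
  · exact (min_le_left _ _).trans (hm y ⟨⟨hyT, mem_closedBall'.2 hy⟩, hfy⟩)
  · exact (min_le_right _ _).trans (not_le.1 hy).le

theorem OrthonormalBasis.exists_apply_eq {𝕜 F ι : Type*} [RCLike 𝕜] [NormedAddCommGroup F]
    [InnerProductSpace 𝕜 F] [FiniteDimensional 𝕜 F] [Fintype ι]
    (hι : finrank 𝕜 F = Fintype.card ι) (i₀ : ι) {u : F} (hu : ‖u‖ = 1) :
    ∃ b : OrthonormalBasis ι 𝕜 F, b i₀ = u := by
  obtain ⟨b, hb⟩ := Orthonormal.exists_orthonormalBasis_extension_of_card_eq hι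
    (v := fun _ ↦ u) (s := {i₀})
    ⟨fun _ ↦ hu, fun i j hij ↦ (hij (Subsingleton.elim i j)).elim⟩
  exact ⟨b, hb i₀ rfl⟩

section InnerProductSpace

variable {E : Type*} [NormedAddCommGroup E] [InnerProductSpace ℝ E]

theorem Metric.exists_infDist_lt_infDist_of_inner_pos [FiniteDimensional ℝ E] {T : Set E}
    (hT : IsClosed T) (hTne : T.Nonempty) {c v : E}
    (hv : ∀ y ∈ T, dist c y = infDist c T → 0 < ⟪v, y - c⟫) :
    ∃ c', infDist c T < infDist c' T := by
  set ρ := infDist c T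
  obtain ⟨m, hρm, hm⟩ := exists_gt_infDist_forall_le_dist hT (by fun_prop) hv
  have hv0 : 0 < ‖v‖ := by
    obtain ⟨y, hyT, hy⟩ := hT.exists_infDist_eq_dist hTne c
    refine norm_pos_iff.2 fun h ↦ ?_
    simpa [h] using hv y hyT hy.symm
  set δ := (m - ρ) / 2
  have hδ : 0 < δ := by simp only [δ]; linarith
  refine ⟨c - (δ / ‖v‖) • v, ?_⟩
  have hshift : ‖(δ / ‖v‖) • v‖ = δ := by
    rw [norm_smul, Real.norm_of_nonneg (by positivity), div_mul_cancel₀ _ hv0.ne']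
  have hρ : 0 ≤ ρ := infDist_nonneg
  have hlt : ρ < min (m - δ) √(ρ ^ 2 + δ ^ 2) :=
    lt_min (by simp only [δ]; linarith) ((Real.lt_sqrt hρ).2 (by nlinarith))
  refine hlt.trans_le ((le_infDist hTne).2 fun y hy ↦ ?_)
  rcases le_or_gt ⟪v, y - c⟫ 0 with hyv | hyv
  · have := dist_triangle c (c - (δ / ‖v‖) • v) y
    rw [dist_self_sub_right, hshift] at this
    linarith [min_le_left (m - δ) √(ρ ^ 2 + δ ^ 2), hm y hy hyv]
  · refine (min_le_right _ _).trans (Real.sqrt_le_iff.2 ⟨dist_nonneg, ?_⟩)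
    have hρy : ρ ≤ ‖y - c‖ := by rw [← dist_eq_norm']; exact infDist_le_dist_of_mem hy
    have hexp : dist (c - (δ / ‖v‖) • v) y ^ 2
        = ‖y - c‖ ^ 2 + 2 * (δ / ‖v‖) * ⟪v, y - c⟫ + δ ^ 2 := by
      rw [dist_eq_norm', show y - (c - (δ / ‖v‖) • v) = (y - c) + (δ / ‖v‖) • v by abel,
        norm_add_sq_real, hshift, real_inner_smul_right, real_inner_comm]
      ring
    rw [hexp]
    nlinarith [mul_pos (div_pos hδ hv0) hyv]

theorem Metric.mem_convexHull_inter_sphere_of_forall_infDist_le [FiniteDimensional ℝ E]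
    {T : Set E} (hT : IsClosed T) (hTne : T.Nonempty) {c : E}
    (hc : ∀ x, infDist x T ≤ infDist c T) :
    c ∈ convexHull ℝ (T ∩ sphere c (infDist c T)) := by
  by_contra hcN
  obtain ⟨f, s, hfc, hfs⟩ := geometric_hahn_banach_point_closed (convex_convexHull ℝ _)
    ((isCompact_sphere c _).inter_left hT).convexHull.isClosed hcN
  obtain ⟨c', hc'⟩ := exists_infDist_lt_infDist_of_inner_pos hT hTne
    (v := (InnerProductSpace.toDual ℝ E).symm f) fun y hyT hy ↦ by
      have := hfs y (subset_convexHull ℝ _ ⟨hyT, by rwa [mem_sphere, dist_comm]⟩)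
      rw [inner_sub_right, InnerProductSpace.toDual_symm_apply, InnerProductSpace.toDual_symm_apply]
      linarith
  exact (hc c').not_gt hc'

theorem Convex.inner_sub_le_norm_sq {X : Set E} (hX : Convex ℝ X) {c x y : E}
    (hball : ball c ‖y - c‖ ⊆ X) (hy : y ∉ interior X) (hx : x ∈ X) :
    ⟪y - c, x - c⟫ ≤ ‖y - c‖ ^ 2 := by
  by_contra! hlt
  set p := ⟪y - c, x - y⟫
  have hp : 0 < p := by
    have : p = ⟪y - c, x - c⟫ - ‖y - c‖ ^ 2 := by
      rw [← real_inner_self_eq_norm_sq, ← inner_sub_right, sub_sub_sub_cancel_right]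
    linarith
  have hxy : 0 < ‖x - y‖ := norm_pos_iff.2 fun h ↦ by simp [p, h] at hp
  obtain ⟨t, ht, htp⟩ : ∃ t : ℝ, 0 < t ∧ t * ‖x - y‖ ^ 2 = p :=
    ⟨p / ‖x - y‖ ^ 2, by positivity, div_mul_cancel₀ _ (by positivity)⟩
  -- `y - t • (x - y)` lies in the open ball, and `y` lies strictly between it and `x`
  have hz : y - t • (x - y) ∈ interior X := by
    refine interior_maximal hball isOpen_ball (mem_ball_iff_norm.2 ?_)
    have hsq : ‖y - t • (x - y) - c‖ ^ 2 = ‖y - c‖ ^ 2 - t * p := by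
      rw [show y - t • (x - y) - c = (y - c) - t • (x - y) by abel, norm_sub_sq_real, norm_smul,
        real_inner_smul_right, Real.norm_of_nonneg ht.le]
      linear_combination t * htp
    nlinarith [norm_nonneg (y - t • (x - y) - c), norm_nonneg (y - c), mul_pos ht hp]
  have h1t : (1 + t)⁻¹ * (1 + t) = 1 := inv_mul_cancel₀ (by positivity)
  refine hy (hX.openSegment_interior_closure_subset_interior hz (subset_closure hx)
    ⟨(1 + t)⁻¹, t * (1 + t)⁻¹, by positivity, by positivity, by linear_combination h1t, ?_⟩)
  linear_combination (norm := module) h1t • y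

theorem Convex.exists_norm_eq_one_inner_mem_Icc [FiniteDimensional ℝ E] {X : Set E}
    (hX : Convex ℝ X) {c : E} (hmax : IsMaxOn (fun x ↦ infDist x Xᶜ) X c)
    (hρ : 0 < infDist c Xᶜ) :
    ∃ u : E, ‖u‖ = 1 ∧
      ∀ x ∈ X, ⟪u, x - c⟫ ∈ Icc (-(finrank ℝ E * infDist c Xᶜ)) (infDist c Xᶜ) := by
  have hne : Xᶜ.Nonempty := nonempty_iff_ne_empty.2 fun h ↦ by simp [h] at hρ
  set ρ := infDist c Xᶜ
  have hglobal : ∀ x, infDist x (closure Xᶜ) ≤ infDist c (closure Xᶜ) := fun x ↦ by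
    rw [infDist_closure, infDist_closure]
    by_cases hx : x ∈ X
    · exact hmax hx
    · rw [infDist_zero_of_mem hx]; exact hρ.le
  have hcN := mem_convexHull_inter_sphere_of_forall_infDist_le isClosed_closure hne.closure hglobal
  rw [infDist_closure] at hcN
  obtain ⟨ι, _, z, w, hzN, hz, hw0, hw1, hwz⟩ := eq_pos_convex_span_of_mem_convexHull hcN
  have hzc : ∀ i, ‖z i - c‖ = ρ := fun i ↦ by rw [← dist_eq_norm]; exact (hzN (mem_range_self i)).2
  -- Carathéodory: at most `finrank + 1` points, so some weight is at least `1 / (finrank + 1)`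
  have hcard : (Fintype.card ι : ℝ) ≤ finrank ℝ E + 1 := by
    have := Submodule.finrank_le (vectorSpan ℝ (range z))
    have := hz.card_le_finrank_succ
    exact_mod_cast (by omega : Fintype.card ι ≤ finrank ℝ E + 1)
  have : Nonempty ι := by
    by_contra h
    rw [not_nonempty_iff] at h
    simp at hw1
  obtain ⟨j, -, hj⟩ := Finset.exists_le_of_sum_le (s := Finset.univ)
    (f := fun _ ↦ (finrank ℝ E + 1 : ℝ)⁻¹) (g := w) Finset.univ_nonempty (by
      rw [hw1, Finset.sum_const, Finset.card_univ, nsmul_eq_mul]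
      exact mul_inv_le_one_of_le₀ hcard (by positivity))
  refine ⟨ρ⁻¹ • (z j - c), ?_, fun x hx ↦ ?_⟩
  · rw [norm_smul, hzc, Real.norm_of_nonneg (by positivity), inv_mul_cancel₀ hρ.ne']
  have ha : ∀ i, ⟪z i - c, x - c⟫ ≤ ρ ^ 2 := fun i ↦ by
    have hzi : z i ∉ interior X := by
      rw [← mem_compl_iff, ← closure_compl]; exact (hzN (mem_range_self i)).1
    rw [← hzc i]
    exact hX.inner_sub_le_norm_sq (by rw [hzc]; exact ball_infDist_compl_subset) hzi hx
  have hsum : ∑ i, w i * ⟪z i - c, x - c⟫ = 0 := by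
    simp_rw [← real_inner_smul_left, ← sum_inner, smul_sub, Finset.sum_sub_distrib, hwz,
      ← Finset.sum_smul, hw1, one_smul, sub_self, inner_zero_left]
  have hlow := neg_mul_le_of_sum_mul_eq_zero (fun i ↦ (hw0 i).le) hw1 hsum ha (k := finrank ℝ E + 1)
    (by rwa [← inv_mul_le_iff₀ (by positivity), mul_one])
  rw [real_inner_smul_left, Set.mem_Icc, le_inv_mul_iff₀ hρ, inv_mul_le_iff₀ hρ]
  constructor <;> nlinarith [ha j]

theorem OrthonormalBasis.volume_le_prod_ediam [FiniteDimensional ℝ E] [MeasurableSpace E]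
    [BorelSpace E] {ι : Type*} [Fintype ι] (b : OrthonormalBasis ι ℝ E) (X : Set E) :
    volume X ≤ ∏ i, ediam ((fun x ↦ ⟪b i, x⟫) '' X) := by
  let e := b.measurableEquiv.trans (MeasurableEquiv.toLp 2 (ι → ℝ)).symm
  have he : MeasurePreserving e :=
    (EuclideanSpace.volume_preserving_symm_measurableEquiv_toLp ι).comp
      b.measurePreserving_measurableEquiv
  calc volume X ≤ volume (e ⁻¹' univ.pi fun i ↦ (fun x ↦ ⟪b i, x⟫) '' X) :=
        measure_mono fun x hx i _ ↦ ⟨x, hx, (b.repr_apply_apply x i).symm⟩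
    _ = ∏ i, volume ((fun x ↦ ⟪b i, x⟫) '' X) := by rw [he.measure_preimage_equiv, volume_pi_pi]
    _ ≤ _ := Finset.prod_le_prod' fun i _ ↦ Real.volume_le_diam _

theorem Convex.volume_le_of_not_exists_closedBall_subset [FiniteDimensional ℝ E] [Nontrivial E]
    [MeasurableSpace E] [BorelSpace E] {X : Set E} (hXc : IsCompact X) (hX : Convex ℝ X)
    {r : ℝ} (hr : ¬ ∃ v, closedBall v r ⊆ X) :
    volume X ≤ ENNReal.ofReal ((finrank ℝ E + 1) * r) * ediam X ^ (finrank ℝ E - 1) := by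
  rcases (interior X).eq_empty_or_nonempty with hint | ⟨x₁, hx₁⟩
  · have hfr : X ⊆ frontier X := fun x hx ↦ by
      rw [frontier, hint, sdiff_empty]; exact subset_closure hx
    simp [measure_mono_null hfr (hX.addHaar_frontier volume)]
  have hXcne : Xᶜ.Nonempty := nonempty_compl.2 hXc.ne_univ
  obtain ⟨c, hc, hmax⟩ := hXc.exists_isMaxOn ⟨x₁, interior_subset hx₁⟩
    (continuous_infDist_pt _).continuousOn
  set ρ := infDist c Xᶜ
  have hρ : 0 < ρ := by
    refine lt_of_lt_of_le ?_ (hmax (interior_subset hx₁))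
    refine (infDist_pos_iff_notMem_closure hXcne).1 ?_
    rw [closure_compl]
    exact not_not.2 hx₁
  have hρr : ρ ≤ r := le_of_not_ge fun h ↦ hr ⟨c, (closedBall_subset_closedBall h).trans
    ((closedBall_infDist_compl_subset_closure hc).trans hXc.isClosed.closure_subset)⟩
  obtain ⟨u, hu, hslab⟩ := hX.exists_norm_eq_one_inner_mem_Icc hmax hρ
  let i₀ : Fin (finrank ℝ E) := ⟨0, finrank_pos⟩
  obtain ⟨b, hb⟩ := OrthonormalBasis.exists_apply_eq (Fintype.card_fin _).symm i₀ hu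
  have hwidth : ediam ((fun x ↦ ⟪b i₀, x⟫) '' X) ≤ ENNReal.ofReal ((finrank ℝ E + 1) * ρ) := by
    refine ediam_le_of_forall_dist_le ?_
    rintro _ ⟨x, hx, rfl⟩ _ ⟨y, hy, rfl⟩
    have hx' := hslab x hx
    have hy' := hslab y hy
    rw [inner_sub_right, Set.mem_Icc] at hx' hy'
    rw [hb, Real.dist_eq, abs_sub_le_iff]
    constructor <;> linarith
  have hproj : ∀ i, ediam ((fun x ↦ ⟪b i, x⟫) '' X) ≤ ediam X := fun i ↦ by
    have hK : ‖innerSL ℝ (b i)‖₊ = 1 := by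
      rw [← NNReal.coe_eq_one, coe_nnnorm, innerSL_apply_norm, b.norm_eq_one]
    simpa [hK] using (innerSL ℝ (b i)).lipschitz.ediam_image_le X
  classical
  calc volume X ≤ ∏ i, ediam ((fun x ↦ ⟪b i, x⟫) '' X) := b.volume_le_prod_ediam X
    _ = ediam ((fun x ↦ ⟪b i₀, x⟫) '' X) * ∏ i ∈ {i₀}ᶜ, ediam ((fun x ↦ ⟪b i, x⟫) '' X) :=
        Fintype.prod_eq_mul_prod_compl i₀ _
    _ ≤ ENNReal.ofReal ((finrank ℝ E + 1) * ρ) * ∏ i ∈ {i₀}ᶜ, ediam X :=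
        mul_le_mul' hwidth (Finset.prod_le_prod' fun i _ ↦ hproj i)
    _ ≤ ENNReal.ofReal ((finrank ℝ E + 1) * r) * ediam X ^ (finrank ℝ E - 1) := by
        rw [Finset.prod_const, Finset.card_compl, Finset.card_singleton, Fintype.card_fin]
        gcongr

end InnerProductSpace

theorem stmt_5_general (X : Set (EuclideanSpace ℝ (Fin 2))) (hXc : IsCompact X)
    (hXconv : Convex ℝ X) (hdiam : Metric.diam X ≤ 2) (r : ℝ)
    (hnodisk : ¬ ∃ v : EuclideanSpace ℝ (Fin 2), Metric.closedBall v r ⊆ X) :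
    volume X ≤ ENNReal.ofReal (6 * r) := by
  have hvol := hXconv.volume_le_of_not_exists_closedBall_subset hXc hnodisk
  have hediam : ediam X ≤ ENNReal.ofReal 2 := ediam_le_of_forall_dist_le fun x hx y hy ↦
    (dist_le_diam_of_mem hXc.isBounded hx hy).trans hdiam
  rw [finrank_euclideanSpace_fin] at hvol
  calc volume X ≤ ENNReal.ofReal ((2 + 1) * r) * ediam X ^ (2 - 1) := hvol
    _ ≤ ENNReal.ofReal ((2 + 1) * r) * ENNReal.ofReal 2 := by rw [pow_one]; gcongr
    _ = ENNReal.ofReal (6 * r) := by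
        rw [← ENNReal.ofReal_mul' (by norm_num)]
        ring_nf

/-- Planar estimate: a compact convex set of diameter at most 2 that contains no closed
disk of radius `r` has area at most `6 r`. -/
theorem stmt_5 (X : Set (EuclideanSpace ℝ (Fin 2))) (hXc : IsCompact X)
    (hXconv : Convex ℝ X) (hdiam : Metric.diam X ≤ 2) (r : ℝ) (hr : r ∈ Set.Ioc (0 : ℝ) 1)
    (hnodisk : ¬ ∃ v : EuclideanSpace ℝ (Fin 2), Metric.closedBall v r ⊆ X) :
    volume X ≤ ENNReal.ofReal (6 * r) :=
  stmt_5_general X hXc hXconv hdiam r hnodisk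
end

section
/- Let ε > 0 and L > 0, and let Q be a convex subset of ℝ × ℝ with Q ⊆ {p | 0 ≤ p.2 ∧ p.2 ≤ ε} and containing the segment {(t, 0) | |t| ≤ L}. Let q ∈ Q with |q.1| ≤ L / 2, and let u = (u₁, u₂) with u₂ > 0 be an outer normal of Q at q, i.e., for all x ∈ Q, u₁ * x.1 + u₂ * x.2 ≤ u₁ * q.1 + u₂ * q.2. Then |u₁| / u₂ ≤ 2 * ε / L. -/
/-! The supporting line lies above both endpoints `(±L, 0)` of the base, so
`|u₁| L ≤ u₁ q₁ + u₂ q₂`; on the other hand `|q₁| ≤ L / 2` and `q₂ ≤ ε` bound the right-hand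
side by `|u₁| L / 2 + u₂ ε`. -/

lemma abs_mul_le_of_mul_le_of_neg_mul_le {a L c : ℝ} (hL : 0 ≤ L) (h₁ : a * L ≤ c)
    (h₂ : -a * L ≤ c) : |a| * L ≤ c := by
  rw [← abs_of_nonneg hL, ← abs_mul]
  exact abs_le'.mpr ⟨h₁, by linarith⟩

lemma abs_fst_mul_le_of_forall_base_le {Q : Set (ℝ × ℝ)} {L c u₁ u₂ : ℝ} (hL : 0 ≤ L)
    (hbase : ∀ t : ℝ, |t| ≤ L → ((t, 0) : ℝ × ℝ) ∈ Q)
    (hsupp : ∀ x ∈ Q, u₁ * x.1 + u₂ * x.2 ≤ c) : |u₁| * L ≤ c := by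
  have hright := hsupp _ (hbase L (abs_of_nonneg hL).le)
  have hleft := hsupp _ (hbase (-L) (by rw [abs_neg, abs_of_nonneg hL]))
  simp only [mul_zero, add_zero] at hright hleft
  exact abs_mul_le_of_mul_le_of_neg_mul_le hL hright (by linarith)

theorem stmt_6_general (ε L : ℝ) (hL : 0 < L) (Q : Set (ℝ × ℝ))
    (hQsub : Q ⊆ {p : ℝ × ℝ | 0 ≤ p.2 ∧ p.2 ≤ ε})
    (hbase : ∀ t : ℝ, |t| ≤ L → ((t, 0) : ℝ × ℝ) ∈ Q)
    (q : ℝ × ℝ) (hq : q ∈ Q) (hqmid : |q.1| ≤ L / 2)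
    (u₁ u₂ : ℝ) (hu₂ : 0 < u₂)
    (hsupp : ∀ x ∈ Q, u₁ * x.1 + u₂ * x.2 ≤ u₁ * q.1 + u₂ * q.2) :
    |u₁| / u₂ ≤ 2 * ε / L := by
  have hbase_bound : |u₁| * L ≤ u₁ * q.1 + u₂ * q.2 :=
    abs_fst_mul_le_of_forall_base_le hL.le hbase hsupp
  have hmid : u₁ * q.1 ≤ |u₁| * (L / 2) :=
    calc u₁ * q.1 ≤ |u₁| * |q.1| := by rw [← abs_mul]; exact le_abs_self _
      _ ≤ |u₁| * (L / 2) := by gcongr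
  have hheight : u₂ * q.2 ≤ u₂ * ε := mul_le_mul_of_nonneg_left (hQsub hq).2 hu₂.le
  rw [div_le_div_iff₀ hu₂ hL]
  linarith

/-- Two-dimensional supporting-line estimate (Figure 2): a supporting line of a flat
convex set at a point near the middle of its long base is nearly horizontal. -/
theorem stmt_6 (ε L : ℝ) (hε : 0 < ε) (hL : 0 < L) (Q : Set (ℝ × ℝ))
    (hQconv : Convex ℝ Q) (hQsub : Q ⊆ {p : ℝ × ℝ | 0 ≤ p.2 ∧ p.2 ≤ ε})
    (hbase : ∀ t : ℝ, |t| ≤ L → ((t, 0) : ℝ × ℝ) ∈ Q)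
    (q : ℝ × ℝ) (hq : q ∈ Q) (hqmid : |q.1| ≤ L / 2)
    (u₁ u₂ : ℝ) (hu₂ : 0 < u₂)
    (hsupp : ∀ x ∈ Q, u₁ * x.1 + u₂ * x.2 ≤ u₁ * q.1 + u₂ * q.2) :
    |u₁| / u₂ ≤ 2 * ε / L :=
  stmt_6_general ε L hL Q hQsub hbase q hq hqmid u₁ u₂ hu₂ hsupp
end

section
/- Let k be a positive natural number, let v : Fin k → EuclideanSpace ℝ (Fin 3) be a family of unit vectors, and let δ ∈ (0, π]. Then there exists a unit vector n ∈ EuclideanSpace ℝ (Fin 3) such that the number of indices i with ⟪n, v i⟫ ≥ Real.cos δ is at least k * (1 − Real.cos δ) / 2. -/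
/-!
Average over a uniformly random point `x` of the unit ball of a 3-dimensional space. With
`c = cos δ`, its direction `x / ‖x‖` lies within angle `δ` of a unit vector `u` exactly when `x`
lies in the solid cone `{x | c * ‖x‖ ≤ ⟪u, x⟫}`, so the expected number of good indices is `k`
times the volume of that cone inside the ball divided by the volume `4π/3` of the ball, and some
direction beats the average.

The cone volume is Archimedes' computation. Splitting `x = t u + z` with `z ⊥ u`, the map
`z ↦ ‖z‖²` on the 2-dimensional complement pushes Lebesgue measure to `π` times Lebesgue measure
on `[0, ∞)`; hence `x ↦ (⟪u, x⟫, ‖x‖²)` pushes it to `π` times Lebesgue measure on the region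
`t² ≤ s`. The cone inside the ball becomes `{t² ≤ s ≤ 1, c √s ≤ t}`, whose `s`-slices are the
intervals `[c √s, √s]`, of area `∫₀¹ (1 - c) √s ds = 2 (1 - c) / 3`.
-/

open MeasureTheory Set Real Module RealInnerProductSpace

theorem map_sq_norm_volume_of_finrank_eq_two {F : Type*} [NormedAddCommGroup F]
    [InnerProductSpace ℝ F] [FiniteDimensional ℝ F] [MeasurableSpace F] [BorelSpace F]
    (hF : finrank ℝ F = 2) :
    (volume : Measure F).map (fun z => ‖z‖ ^ 2) = ENNReal.ofReal π • volume.restrict (Ici 0) := by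
  have : Nontrivial F := nontrivial_of_finrank_pos (R := ℝ) (by omega)
  have hIio (a : ℝ) : (volume : Measure F).map (fun z => ‖z‖ ^ 2) (Iio a) =
      ENNReal.ofReal π * ENNReal.ofReal a := by
    have hball : (fun z : F => ‖z‖ ^ 2) ⁻¹' Iio a = Metric.ball 0 √a := by
      ext z
      simp [lt_sqrt (norm_nonneg z)]
    rw [Measure.map_apply (by fun_prop) measurableSet_Iio, hball,
      InnerProductSpace.volume_ball_of_dim_even (k := 1) hF, hF,
      ← ENNReal.ofReal_pow (sqrt_nonneg a), sq_sqrt']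
    simp [mul_comm]
  refine Measure.ext_of_generateFrom_of_iUnion (range Iio) (fun n : ℕ => Iio (n : ℝ))
    (BorelSpace.measurable_eq.trans (borel_eq_generateFrom_Iio ℝ)) isPiSystem_Iio
    (iUnion_eq_univ_iff.2 fun x => exists_nat_gt x) (fun n => mem_range_self _) (fun n => ?_) ?_
  · exact (hIio _).trans_ne (ENNReal.mul_ne_top ENNReal.ofReal_ne_top ENNReal.ofReal_ne_top)
  · rintro _ ⟨a, rfl⟩
    rw [hIio, Measure.smul_apply, Measure.restrict_apply measurableSet_Iio, Iio_inter_Ici,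
      volume_Ico, sub_zero, smul_eq_mul]

theorem integral_sqrt_zero_one : ∫ s in (0 : ℝ)..1, √s = 2 / 3 := by
  simp_rw [sqrt_eq_rpow]
  rw [integral_rpow (Or.inl (by norm_num))]
  norm_num

theorem volume_parabolic_sector {c : ℝ} (hc : -1 ≤ c) (hc1 : c ≤ 1) :
    volume {p : ℝ × ℝ | (p.2 ≤ 1 ∧ c * √p.2 ≤ p.1) ∧ p.1 ^ 2 ≤ p.2} =
      ENNReal.ofReal (2 / 3 * (1 - c)) := by
  have hT : MeasurableSet {p : ℝ × ℝ | (p.2 ≤ 1 ∧ c * √p.2 ≤ p.1) ∧ p.1 ^ 2 ≤ p.2} :=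
    ((measurableSet_le measurable_snd measurable_const).inter
      (measurableSet_le (by fun_prop) measurable_fst)).inter
      (measurableSet_le (by fun_prop) measurable_snd)
  have hslice (s : ℝ) : volume {t : ℝ | (s ≤ 1 ∧ c * √s ≤ t) ∧ t ^ 2 ≤ s} =
      (Icc 0 1).indicator (fun s => ENNReal.ofReal ((1 - c) * √s)) s := by
    by_cases hs : s ∈ Icc (0 : ℝ) 1
    · have : {t : ℝ | (s ≤ 1 ∧ c * √s ≤ t) ∧ t ^ 2 ≤ s} = Icc (c * √s) √s := by
        ext t
        simp only [mem_ofPred_eq, mem_Icc, Real.sq_le hs.1]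
        constructor
        · rintro ⟨⟨-, h⟩, -, h'⟩
          exact ⟨h, h'⟩
        · rintro ⟨h, h'⟩
          exact ⟨⟨hs.2, h⟩, by nlinarith [sqrt_nonneg s], h'⟩
      rw [this, volume_Icc, indicator_of_mem hs]
      congr 1
      ring
    · rw [indicator_of_notMem hs, ← measure_empty (μ := (volume : Measure ℝ))]
      congr 1
      exact eq_empty_of_forall_notMem fun t ⟨⟨h1, _⟩, h2⟩ => hs ⟨(sq_nonneg t).trans h2, h1⟩
  rw [Measure.volume_eq_prod, Measure.prod_apply_symm hT]
  simp only [preimage_ofPred_eq, hslice]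
  rw [lintegral_indicator measurableSet_Icc, ← ofReal_integral_eq_lintegral_ofReal,
    integral_Icc_eq_integral_Ioc, ← intervalIntegral.integral_of_le zero_le_one,
    intervalIntegral.integral_const_mul, integral_sqrt_zero_one, mul_comm]
  · exact (by fun_prop : Continuous fun s => (1 - c) * √s).integrableOn_Icc
  · exact .of_forall fun s => mul_nonneg (by linarith) (sqrt_nonneg s)

theorem exists_notMem_null_sum_measure_div_le_ncard {α ι : Type*} [MeasurableSpace α]
    [Fintype ι] {μ : Measure α} [IsFiniteMeasure μ] (hμ : μ ≠ 0) {S : ι → Set α}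
    (hS : ∀ i, MeasurableSet (S i)) {N : Set α} (hN : μ N = 0) :
    ∃ x ∉ N, (∑ i, μ (S i)) / μ univ ≤ ({i | x ∈ S i} : Set ι).ncard := by
  classical
  have hcount (x : α) :
      ∑ i, (S i).indicator 1 x = (({i | x ∈ S i} : Set ι).ncard : ENNReal) := by
    simp [indicator_apply, Finset.sum_boole, ncard_eq_toFinset_card']
  have hint : ∫⁻ x, ∑ i, (S i).indicator 1 x ∂μ = ∑ i, μ (S i) := by
    rw [lintegral_finsetSum _ fun i _ => measurable_one.indicator (hS i)]
    simp [lintegral_indicator_one (hS _)]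
  obtain ⟨x, hxN, hx⟩ := exists_notMem_null_laverage_le hμ
    (hint.trans_ne (ENNReal.sum_ne_top.2 fun i _ => measure_ne_top μ _)) hN
  refine ⟨x, hxN, ?_⟩
  rwa [laverage_eq, hint, hcount] at hx

section InnerProductSpace

variable {E : Type*} [NormedAddCommGroup E] [InnerProductSpace ℝ E] [FiniteDimensional ℝ E]
  [MeasurableSpace E] [BorelSpace E]

theorem exists_measurePreserving_equiv_inner_prod_orthogonal {u : E} (hu : ‖u‖ = 1) :
    ∃ e : E ≃ᵐ ℝ × (ℝ ∙ u)ᗮ, MeasurePreserving e ∧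
      ∀ x, (e x).1 = ⟪u, x⟫ ∧ ‖x‖ ^ 2 = (e x).1 ^ 2 + ‖(e x).2‖ ^ 2 := by
  let L : E ≃ₗᵢ[ℝ] WithLp 2 (ℝ × (ℝ ∙ u)ᗮ) := (ℝ ∙ u).orthogonalDecomposition.trans
    (LinearIsometryEquiv.withLpProdCongr 2 (LinearIsometryEquiv.toSpanUnitSingleton u hu).symm
      (LinearIsometryEquiv.refl ℝ _))
  refine ⟨L.toMeasurableEquiv.trans (MeasurableEquiv.toLp 2 _).symm,
    L.measurePreserving.trans (WithLp.volume_preserving_symm_measurableEquiv_toLp_prod _ _),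
    fun x => ⟨?_, ?_⟩⟩
  · change (L x).fst = ⟪u, x⟫
    simp only [L, LinearIsometryEquiv.trans_apply, Submodule.orthogonalDecomposition_apply,
      LinearIsometryEquiv.withLpProdCongr_apply, WithLp.toLp_fst,
      LinearIsometryEquiv.symm_apply_eq]
    ext1
    simp [Submodule.starProjection_unit_singleton ℝ hu]
  · rw [← L.norm_map x, WithLp.prod_norm_sq_eq_of_L2, norm_eq_abs, sq_abs]
    rfl

theorem map_inner_sq_norm_volume_of_finrank_eq_three (hE : finrank ℝ E = 3) {u : E}
    (hu : ‖u‖ = 1) :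
    (volume : Measure E).map (fun x => (⟪u, x⟫, ‖x‖ ^ 2)) =
      ENNReal.ofReal π • volume.restrict {p : ℝ × ℝ | p.1 ^ 2 ≤ p.2} := by
  have : Fact (finrank ℝ E = 2 + 1) := ⟨hE⟩
  have hK : finrank ℝ (ℝ ∙ u)ᗮ = 2 :=
    Submodule.finrank_orthogonal_span_singleton (ne_zero_of_norm_ne_zero (hu.trans_ne one_ne_zero))
  obtain ⟨e, he, hex⟩ := exists_measurePreserving_equiv_inner_prod_orthogonal hu
  have hP : MeasurableSet {p : ℝ × ℝ | p.1 ^ 2 ≤ p.2} :=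
    measurableSet_le (by fun_prop) (by fun_prop)
  ext s hs
  have hS : MeasurableSet {q : ℝ × (ℝ ∙ u)ᗮ | (q.1, q.1 ^ 2 + ‖q.2‖ ^ 2) ∈ s} :=
    (by fun_prop : Measurable fun q : ℝ × (ℝ ∙ u)ᗮ => (q.1, q.1 ^ 2 + ‖q.2‖ ^ 2)) hs
  have hpre : (fun x => (⟪u, x⟫, ‖x‖ ^ 2)) ⁻¹' s =
      e ⁻¹' {q : ℝ × (ℝ ∙ u)ᗮ | (q.1, q.1 ^ 2 + ‖q.2‖ ^ 2) ∈ s} := by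
    ext x
    simp [(hex x).1, (hex x).2]
  have hslice (t : ℝ) : volume {z : (ℝ ∙ u)ᗮ | (t, t ^ 2 + ‖z‖ ^ 2) ∈ s} =
      ENNReal.ofReal π * volume {r | (t, r) ∈ s ∧ t ^ 2 ≤ r} := by
    have hmeas : MeasurableSet {r : ℝ | (t, t ^ 2 + r) ∈ s} :=
      measurable_const_add (t ^ 2) (measurable_prodMk_left hs)
    calc volume {z : (ℝ ∙ u)ᗮ | (t, t ^ 2 + ‖z‖ ^ 2) ∈ s}
        = (volume : Measure (ℝ ∙ u)ᗮ).map (fun z => ‖z‖ ^ 2) {r | (t, t ^ 2 + r) ∈ s} :=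
          (Measure.map_apply (by fun_prop) hmeas).symm
      _ = ENNReal.ofReal π * volume ({r | (t, t ^ 2 + r) ∈ s} ∩ Ici 0) := by
          rw [map_sq_norm_volume_of_finrank_eq_two hK, Measure.smul_apply,
            Measure.restrict_apply hmeas, smul_eq_mul]
      _ = ENNReal.ofReal π * volume {r | (t, r) ∈ s ∧ t ^ 2 ≤ r} := by
          rw [← measure_preimage_add volume (t ^ 2) {r | (t, r) ∈ s ∧ t ^ 2 ≤ r}]
          congr 2
          ext r
          simp [and_comm]
  rw [Measure.map_apply (by fun_prop) hs, hpre, he.measure_preimage_equiv, Measure.volume_eq_prod,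
    Measure.prod_apply hS, Measure.smul_apply, Measure.restrict_apply hs, Measure.volume_eq_prod,
    Measure.prod_apply (hs.inter hP), smul_eq_mul,
    ← lintegral_const_mul' _ _ ENNReal.ofReal_ne_top]
  simp only [preimage_ofPred_eq, hslice]
  rfl

theorem volume_closedBall_inter_cone (hE : finrank ℝ E = 3) {u : E} (hu : ‖u‖ = 1) {c : ℝ}
    (hc : -1 ≤ c) (hc1 : c ≤ 1) :
    volume {x : E | ‖x‖ ≤ 1 ∧ c * ‖x‖ ≤ ⟪u, x⟫} = ENNReal.ofReal (2 * π / 3 * (1 - c)) := by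
  have hR : MeasurableSet {p : ℝ × ℝ | p.2 ≤ 1 ∧ c * √p.2 ≤ p.1} :=
    (measurableSet_le measurable_snd measurable_const).inter
      (measurableSet_le (by fun_prop) measurable_fst)
  have hset : {x : E | ‖x‖ ≤ 1 ∧ c * ‖x‖ ≤ ⟪u, x⟫} =
      (fun x => (⟪u, x⟫, ‖x‖ ^ 2)) ⁻¹' {p : ℝ × ℝ | p.2 ≤ 1 ∧ c * √p.2 ≤ p.1} := by
    ext x
    simp
  rw [hset, ← Measure.map_apply (by fun_prop) hR,
    map_inner_sq_norm_volume_of_finrank_eq_three hE hu, Measure.smul_apply,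
    Measure.restrict_apply hR, smul_eq_mul, ← ofPred_and, volume_parabolic_sector hc hc1,
    ← ENNReal.ofReal_mul pi_nonneg]
  congr 1
  ring

theorem exists_norm_eq_one_ncard_inner_ge (hE : finrank ℝ E = 3) {ι : Type*} [Fintype ι]
    (v : ι → E) (hv : ∀ i, ‖v i‖ = 1) {c : ℝ} (hc : -1 ≤ c) (hc1 : c ≤ 1) :
    ∃ n : E, ‖n‖ = 1 ∧ Fintype.card ι * (1 - c) / 2 ≤ ({i | c ≤ ⟪n, v i⟫} : Set ι).ncard := by
  have : Nontrivial E := nontrivial_of_finrank_pos (R := ℝ) (by omega)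
  let μ := volume.restrict (Metric.closedBall (0 : E) 1)
  have hμ : μ univ = ENNReal.ofReal (4 * π / 3) := by
    rw [Measure.restrict_apply_univ, InnerProductSpace.volume_closedBall_of_dim_odd (k := 1) hE,
      hE, ENNReal.ofReal_one, one_pow, one_mul]
    congr 1
    norm_num [Nat.doubleFactorial]
    ring
  have hcone (i : ι) :
      μ {x | c * ‖x‖ ≤ ⟪v i, x⟫} = ENNReal.ofReal (2 * π / 3 * (1 - c)) := by
    rw [Measure.restrict_apply' measurableSet_closedBall,
      ← volume_closedBall_inter_cone hE (hv i) hc hc1]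
    congr 1
    ext x
    simp [and_comm]
  have : IsFiniteMeasure μ := ⟨by rw [hμ]; exact ENNReal.ofReal_lt_top⟩
  obtain ⟨x, hx0, hx⟩ := exists_notMem_null_sum_measure_div_le_ncard (μ := μ)
    (Measure.measure_univ_ne_zero.1 (hμ ▸ (ENNReal.ofReal_pos.2 (by positivity)).ne'))
    (S := fun i => {x | c * ‖x‖ ≤ ⟪v i, x⟫}) (fun i => measurableSet_le (by fun_prop) (by fun_prop))
    (N := {0}) (by simp [μ])
  have hxpos : 0 < ‖x‖ := norm_pos_iff.2 hx0
  refine ⟨‖x‖⁻¹ • x, norm_smul_inv_norm hx0, ?_⟩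
  have hset : {i | c ≤ ⟪‖x‖⁻¹ • x, v i⟫} = {i | c * ‖x‖ ≤ ⟪v i, x⟫} := by
    ext i
    simp only [mem_ofPred_eq, real_inner_smul_left, real_inner_comm (v i)]
    rw [le_inv_mul_iff₀ hxpos, mul_comm]
  simp only [hcone, hμ, Finset.sum_const, Finset.card_univ, nsmul_eq_mul, mem_ofPred_eq] at hx
  rw [← ENNReal.ofReal_natCast, ← ENNReal.ofReal_mul (Nat.cast_nonneg _),
    ← ENNReal.ofReal_div_of_pos (by positivity), ENNReal.ofReal_le_natCast] at hx
  rw [hset]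
  convert hx using 1
  field_simp
  ring

end InnerProductSpace

theorem stmt_7_general (k : ℕ) (v : Fin k → EuclideanSpace ℝ (Fin 3))
    (hv : ∀ i, ‖v i‖ = 1) (δ : ℝ) :
    ∃ n : EuclideanSpace ℝ (Fin 3), ‖n‖ = 1 ∧
      (({i : Fin k | ⟪n, v i⟫ ≥ Real.cos δ}.ncard : ℝ)) ≥
        (k : ℝ) * (1 - Real.cos δ) / 2 := by
  simpa using exists_norm_eq_one_ncard_inner_ge finrank_euclideanSpace_fin v hv
    (neg_one_le_cos δ) (cos_le_one δ)

/-- Averaging step: some direction `n` is within angle `δ` of at least a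
`(1 - cos δ)/2` fraction of the given unit vectors. -/
theorem stmt_7 (k : ℕ) (hk : 0 < k) (v : Fin k → EuclideanSpace ℝ (Fin 3))
    (hv : ∀ i, ‖v i‖ = 1) (δ : ℝ) (hδ : δ ∈ Set.Ioc (0 : ℝ) Real.pi) :
    ∃ n : EuclideanSpace ℝ (Fin 3), ‖n‖ = 1 ∧
      (({i : Fin k | ⟪n, v i⟫ ≥ Real.cos δ}.ncard : ℝ)) ≥
        (k : ℝ) * (1 - Real.cos δ) / 2 :=
  stmt_7_general k v hv δ
end

section
/- Let K be a closed convex subset of EuclideanSpace ℝ (Fin 3), let c ∈ EuclideanSpace ℝ (Fin 3) and let n be a unit vector. Assume Metric.closedBall c 1 ⊆ K and that for every x ∈ K, ⟪n, x⟫ ≤ ⟪n, c⟫ + 1 (so the point c + n is a highest point of K in direction n, and the inscribed unit ball is tangent to the supporting plane there). Then for every ε ∈ (0, 1], MeasureTheory.volume (K ∩ {x | ⟪n, x − c⟫ ≥ 1 − ε}) ≥ ENNReal.ofReal (π * ε^2 / 3). -/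
/-!
The slab contains the cap of height `ε` of the inscribed unit ball (which already contains the
cone of the paper), and that cap contains the cylinder between the planes `⟪n, x - c⟫ = 1 - ε`
and `⟪n, x - c⟫ = 1 - ε / 2` with squared radius `1 - (1 - ε / 2)² = ε - ε² / 4`. Its volume
`(ε / 2) · π (ε - ε² / 4)` is at least `π ε² / 3`. A reflection taking `n` to the last basis vector
puts the cap in coordinates where the cylinder's volume is a product of a disk and an interval.
-/

open RealInnerProductSpace MeasureTheory Metric Set Real

section Cap

variable {E : Type*} [NormedAddCommGroup E] [InnerProductSpace ℝ E] [MeasurableSpace E]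
  [BorelSpace E]

def ballCap (c : E) (r : ℝ) (n : E) (t : ℝ) : Set E :=
  closedBall c r ∩ {x | t ≤ ⟪n, x - c⟫}

theorem measurableSet_ballCap (c : E) (r : ℝ) (n : E) (t : ℝ) :
    MeasurableSet (ballCap c r n t) :=
  measurableSet_closedBall.inter (isClosed_le continuous_const (by fun_prop)).measurableSet

theorem volume_ballCap_eq_of_norm_eq [FiniteDimensional ℝ E] (c : E) (r : ℝ) {n u : E}
    (h : ‖u‖ = ‖n‖) (t : ℝ) :
    volume (ballCap c r n t) = volume (ballCap 0 r u t) := by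
  set f := Submodule.reflection (ℝ ∙ (u - n))ᗮ
  have hfu : f u = n := Submodule.reflection_sub h
  have hmp : MeasurePreserving (fun y => c + f y) :=
    (measurePreserving_add_left volume c).comp f.measurePreserving
  have hpre : (fun y => c + f y) ⁻¹' ballCap c r n t = ballCap 0 r u t := by
    ext y
    simp [ballCap, ← hfu, f.inner_map_map]
  rw [← hpre, hmp.measure_preimage (measurableSet_ballCap c r n t).nullMeasurableSet]

end Cap

def verticalCylinder (R a b : ℝ) : Set (EuclideanSpace ℝ (Fin 3)) :=
  {x | x 0 ^ 2 + x 1 ^ 2 ≤ R ∧ x 2 ∈ Icc a b}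

theorem volume_setOf_sq_add_sq_le {R : ℝ} (hR : 0 ≤ R) :
    volume {y : Fin 2 → ℝ | y 0 ^ 2 + y 1 ^ 2 ≤ R} = ENNReal.ofReal (π * R) := by
  have hpre : WithLp.toLp 2 ⁻¹' closedBall (0 : EuclideanSpace ℝ (Fin 2)) √R =
      {y : Fin 2 → ℝ | y 0 ^ 2 + y 1 ^ 2 ≤ R} := by
    ext y
    rw [mem_preimage, mem_closedBall_zero_iff, EuclideanSpace.norm_eq, sqrt_le_sqrt_iff hR]
    simp
  rw [← hpre, (PiLp.volume_preserving_toLp (Fin 2)).measure_preimage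
    measurableSet_closedBall.nullMeasurableSet, EuclideanSpace.volume_closedBall_fin_two,
    ← ENNReal.ofReal_pow (sqrt_nonneg R), sq_sqrt hR, ← ENNReal.ofReal_mul hR, mul_comm]

theorem volume_verticalCylinder {R : ℝ} (hR : 0 ≤ R) (a b : ℝ) :
    volume (verticalCylinder R a b) = ENNReal.ofReal (b - a) * ENNReal.ofReal (π * R) := by
  set D := {y : Fin 2 → ℝ | y 0 ^ 2 + y 1 ^ 2 ≤ R}
  have hD : MeasurableSet D := measurableSet_le (by fun_prop) measurable_const
  have hpre : WithLp.ofLp ⁻¹' (MeasurableEquiv.piFinSuccAbove (fun _ : Fin 3 => ℝ) 2 ⁻¹'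
      Icc a b ×ˢ D) = verticalCylinder R a b := by
    ext x
    -- `piFinSuccAbove _ 2` splits `x` into `(x 2, ![x 0, x 1])`
    exact and_comm
  rw [← hpre, (PiLp.volume_preserving_ofLp (Fin 3)).measure_preimage
    ((MeasurableEquiv.measurable _) (measurableSet_Icc.prod hD)).nullMeasurableSet,
    (volume_preserving_piFinSuccAbove (fun _ : Fin 3 => ℝ) 2).measure_preimage
    (measurableSet_Icc.prod hD).nullMeasurableSet, Measure.volume_eq_prod, Measure.prod_prod,
    Real.volume_Icc, volume_setOf_sq_add_sq_le hR]

theorem verticalCylinder_subset_ballCap {R a b : ℝ} (ha : 0 ≤ a) (hRb : R + b ^ 2 ≤ 1) :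
    verticalCylinder R a b ⊆ ballCap 0 1 (EuclideanSpace.single 2 1) a := by
  rintro x ⟨hdisk, ha', hb'⟩
  have hx : ‖x‖ ^ 2 ≤ 1 := by
    rw [EuclideanSpace.real_norm_sq_eq, Fin.sum_univ_three]
    nlinarith
  refine ⟨?_, ?_⟩
  · rw [mem_closedBall_zero_iff]
    exact (sq_le_one_iff₀ (norm_nonneg x)).mp hx
  · simpa [EuclideanSpace.inner_single_left] using ha'

theorem ofReal_le_volume_ballCap (c : EuclideanSpace ℝ (Fin 3)) {n : EuclideanSpace ℝ (Fin 3)}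
    (hn : ‖n‖ = 1) {t : ℝ} (ht₀ : 0 ≤ t) (ht₁ : t ≤ 1) :
    ENNReal.ofReal (π * t ^ 2 / 3) ≤ volume (ballCap c 1 n (1 - t)) := by
  have hR : 0 ≤ t - t ^ 2 / 4 := by nlinarith
  calc ENNReal.ofReal (π * t ^ 2 / 3)
      ≤ ENNReal.ofReal (t / 2) * ENNReal.ofReal (π * (t - t ^ 2 / 4)) := by
        rw [← ENNReal.ofReal_mul (by linarith)]
        -- the difference is `π t² (4 - 3t) / 24`
        exact ENNReal.ofReal_le_ofReal <| by
          nlinarith [mul_nonneg (mul_nonneg pi_pos.le (sq_nonneg t)) (by linarith : 0 ≤ 4 - 3 * t)]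
    _ = volume (verticalCylinder (t - t ^ 2 / 4) (1 - t) (1 - t / 2)) := by
        rw [volume_verticalCylinder hR]
        ring_nf
    _ ≤ volume (ballCap 0 1 (EuclideanSpace.single 2 1) (1 - t)) :=
        measure_mono (verticalCylinder_subset_ballCap (by linarith) (by nlinarith))
    _ = volume (ballCap c 1 n (1 - t)) :=
        (volume_ballCap_eq_of_norm_eq c 1 (by simp [hn]) _).symm

theorem stmt_11_general (K : Set (EuclideanSpace ℝ (Fin 3)))
    (c : EuclideanSpace ℝ (Fin 3))
    (n : EuclideanSpace ℝ (Fin 3)) (hn : ‖n‖ = 1)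
    (hball : Metric.closedBall c 1 ⊆ K)
    (ε : ℝ) (hε : ε ∈ Set.Ioc (0 : ℝ) 1) :
    volume (K ∩ {x | ⟪n, x - c⟫ ≥ 1 - ε}) ≥ ENNReal.ofReal (Real.pi * ε ^ 2 / 3) :=
  (ofReal_le_volume_ballCap c hn hε.1.le hε.2).trans
    (measure_mono (inter_subset_inter_left _ hball))

/-- Cone-volume estimate (Case B): if a closed convex set `K` contains a unit ball
tangent to its top supporting plane in direction `n`, then the slab of `K` of width `ε`
below that plane has volume at least `π ε² / 3`. -/
theorem stmt_11 (K : Set (EuclideanSpace ℝ (Fin 3))) (hKcl : IsClosed K)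
    (hKconv : Convex ℝ K) (c : EuclideanSpace ℝ (Fin 3))
    (n : EuclideanSpace ℝ (Fin 3)) (hn : ‖n‖ = 1)
    (hball : Metric.closedBall c 1 ⊆ K)
    (htop : ∀ x ∈ K, ⟪n, x⟫ ≤ ⟪n, c⟫ + 1)
    (ε : ℝ) (hε : ε ∈ Set.Ioc (0 : ℝ) 1) :
    volume (K ∩ {x | ⟪n, x - c⟫ ≥ 1 - ε}) ≥ ENNReal.ofReal (Real.pi * ε ^ 2 / 3) :=
  stmt_11_general K c n hn hball ε hε
end

section
/- Let K be a nonempty compact convex subset of EuclideanSpace ℝ (Fin 3) and let s be a point of the frontier of Metric.cthickening 1 K. Then there exists exactly one unit vector u such that for all x ∈ Metric.cthickening 1 K, ⟪u, x⟫ ≤ ⟪u, s⟫; that is, the parallel body B(K) = Metric.cthickening 1 K has a unique supporting hyperplane (equivalently, a unique outer unit normal) at each of its boundary points. -/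
/-!
Let `p` be the point of `K` nearest to a boundary point `s` of the `δ`-thickening, so that
`‖s - p‖ = δ`. By the projection inequality for convex sets, the hyperplane through `s`
orthogonal to `s - p` supports the thickening. Conversely, if a unit vector `u` supports it at
`s`, then `p + δ u` lies in the thickening, which gives `⟪u, s - p⟫ ≥ δ = ‖u‖ ‖s - p‖`; equality
in Cauchy–Schwarz forces `u = (s - p) / δ`.
-/

open RealInnerProductSpace Metric

theorem Metric.infDist_eq_of_mem_frontier_cthickening {α : Type*} [PseudoMetricSpace α]
    {K : Set α} {δ : ℝ} (hδ : 0 ≤ δ) {s : α} (hs : s ∈ frontier (cthickening δ K)) :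
    infDist s K = δ := by
  rw [infDist, frontier_cthickening_subset K hs, ENNReal.toReal_ofReal hδ]

section NearestPoint

variable {E : Type*} [NormedAddCommGroup E] [InnerProductSpace ℝ E] {K : Set E} {s p : E}

theorem Convex.inner_sub_le_zero_of_infDist_eq_dist (hKconv : Convex ℝ K) (hpK : p ∈ K)
    (hp : infDist s K = dist s p) {q : E} (hqK : q ∈ K) : ⟪s - p, q - p⟫ ≤ 0 := by
  refine (norm_eq_iInf_iff_real_inner_le_zero hKconv hpK).1 ?_ q hqK
  simp only [← dist_eq_norm, ← hp, infDist_eq_iInf]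

theorem IsCompact.inner_le_of_mem_cthickening_dist (hKc : IsCompact K) (hKconv : Convex ℝ K)
    (hpK : p ∈ K) (hp : infDist s K = dist s p) {x : E} (hx : x ∈ cthickening (dist s p) K) :
    ⟪s - p, x⟫ ≤ ⟪s - p, s⟫ := by
  rw [hKc.cthickening_eq_biUnion_closedBall dist_nonneg, Set.mem_iUnion₂] at hx
  obtain ⟨q, hqK, hxq⟩ := hx
  have hxq' : ‖x - q‖ ≤ ‖s - p‖ := by simpa only [mem_closedBall, dist_eq_norm] using hxq
  have hsplit : x - s = (x - q) + (q - p) - (s - p) := by abel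
  have hx_s : ⟪s - p, x - s⟫ ≤ 0 :=
    calc ⟪s - p, x - s⟫ = ⟪s - p, x - q⟫ + ⟪s - p, q - p⟫ - ‖s - p‖ ^ 2 := by
          rw [hsplit, inner_sub_right, inner_add_right, real_inner_self_eq_norm_sq]
      _ ≤ ‖s - p‖ * ‖x - q‖ + 0 - ‖s - p‖ ^ 2 := by
          gcongr
          · exact real_inner_le_norm _ _
          · exact hKconv.inner_sub_le_zero_of_infDist_eq_dist hpK hp hqK
      _ ≤ 0 := by nlinarith [norm_nonneg (s - p)]
  rw [inner_sub_right] at hx_s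
  linarith

theorem eq_inv_norm_smul_of_inner_le_of_mem_cthickening_dist (hpK : p ∈ K) (hsp : s ≠ p)
    {u : E} (hu : ‖u‖ = 1) (hsupp : ∀ x ∈ cthickening (dist s p) K, ⟪u, x⟫ ≤ ⟪u, s⟫) :
    u = ‖s - p‖⁻¹ • (s - p) := by
  have hmem : p + ‖s - p‖ • u ∈ cthickening (dist s p) K := by
    refine mem_cthickening_of_dist_le _ p _ K hpK ?_
    rw [dist_eq_norm, add_sub_cancel_left, norm_smul, hu, norm_norm, mul_one, dist_eq_norm]
  have hlower : ‖s - p‖ ≤ ⟪u, s - p⟫ := by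
    have := hsupp _ hmem
    rw [inner_add_right, real_inner_smul_right, real_inner_self_eq_norm_sq, hu] at this
    rw [inner_sub_right]
    linarith
  have hupper : ⟪u, s - p⟫ ≤ ‖s - p‖ := by
    simpa only [hu, one_mul] using real_inner_le_norm u (s - p)
  have hcs : ‖s - p‖ • u = s - p := by
    have hcs_eq : ⟪u, s - p⟫ = ‖u‖ * ‖s - p‖ := by rw [hu, one_mul]; linarith
    simpa only [hu, one_smul] using inner_eq_norm_mul_iff_real.1 hcs_eq
  rw [← hcs, norm_smul, hu, mul_one, norm_norm, smul_smul,
    inv_mul_cancel₀ (norm_ne_zero_iff.2 (sub_ne_zero.2 hsp)), one_smul]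

end NearestPoint

theorem IsCompact.existsUnique_unit_normal_of_mem_frontier_cthickening {E : Type*}
    [NormedAddCommGroup E] [InnerProductSpace ℝ E] {K : Set E} (hKne : K.Nonempty)
    (hKc : IsCompact K) (hKconv : Convex ℝ K) {δ : ℝ} (hδ : 0 < δ) {s : E}
    (hs : s ∈ frontier (cthickening δ K)) :
    ∃! u : E, ‖u‖ = 1 ∧ ∀ x ∈ cthickening δ K, ⟪u, x⟫ ≤ ⟪u, s⟫ := by
  obtain ⟨p, hpK, hp⟩ := hKc.exists_infDist_eq_dist hKne s
  have hδp : δ = dist s p := (infDist_eq_of_mem_frontier_cthickening hδ.le hs).symm.trans hp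
  have hsp : s ≠ p := dist_pos.1 (hδp ▸ hδ)
  subst hδp
  refine ⟨‖s - p‖⁻¹ • (s - p), ⟨norm_smul_inv_norm (sub_ne_zero.2 hsp), fun x hx ↦ ?_⟩,
    fun u ⟨hu, hsupp⟩ ↦ eq_inv_norm_smul_of_inner_le_of_mem_cthickening_dist hpK hsp hu hsupp⟩
  simp only [real_inner_smul_left]
  exact mul_le_mul_of_nonneg_left (hKc.inner_le_of_mem_cthickening_dist hKconv hpK hp hx)
    (inv_nonneg.2 (norm_nonneg _))

/-- Smoothness of the parallel body: `B(K) = Metric.cthickening 1 K` has a unique outer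
unit normal at each of its boundary points. -/
theorem stmt_12 (K : Set (EuclideanSpace ℝ (Fin 3))) (hKne : K.Nonempty)
    (hKc : IsCompact K) (hKconv : Convex ℝ K)
    (s : EuclideanSpace ℝ (Fin 3)) (hs : s ∈ frontier (Metric.cthickening 1 K)) :
    ∃! u : EuclideanSpace ℝ (Fin 3),
      ‖u‖ = 1 ∧ ∀ x ∈ Metric.cthickening 1 K, ⟪u, x⟫ ≤ ⟪u, s⟫ :=
  hKc.existsUnique_unit_normal_of_mem_frontier_cthickening hKne hKconv one_pos hs
end
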